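/- arXiv:1108.4092 — 3 statements merged into one kernel-verified Lean document; each statement's English description precedes it below -/
import Mathlib

section
/- Let Γ = (V,E) be an infinite connected simple graph with path metric d, let s be a natural number such that ρ(v) ≤ s for all v ∈ V, let (aₙ)ₙ∈ℕ be an arrow in Γ, and suppose there is a natural number α such that for every n ∈ ℕ there is a vertex x with S(a₀,n) ⊆ B(x,α). Then Γ is an asymptotic ray. -/
/-!
Put `g v = d(v, a₀)`. Each sphere about `a₀` lies in a ball of radius `α`, so by the degree bound
it has at most `(s + 1) ^ α` vertices, and each of its vertices is within `2α` of the arrow vertex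
on it; hence `d(u, v) ≤ 4α + |g u - g v|`. Enumerate `V` sphere by sphere. Positions of `u` and
`v` then differ by at most `(s + 1) ^ α * (|g u - g v| + 1)`, and since the arrow meets every
sphere, `|g u - g v|` is at most the difference of positions. Together with
`|g u - g v| ≤ d(u, v)` this gives both Lipschitz bounds, the additive constants being absorbed
because distinct points are at distance at least `1`.
-/

/-- `a` is an arrow in `G`: an injective sequence of vertices with consecutive terms
adjacent and `d(a 0, a n) = n` for all `n`. -/
def IsArrow {V : Type*} (G : SimpleGraph V) (a : ℕ → V) : Prop :=
  Function.Injective a ∧ ∀ n : ℕ, G.Adj (a n) (a (n + 1)) ∧ G.dist (a 0) (a n) = n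

/-- `G` is an asymptotic ray: there is a bijection `f : V → ℕ` and naturals `m, m'` with
`|f u - f v| ≤ m * d(u,v)` and `d(f⁻¹ i, f⁻¹ j) ≤ m' * |i - j|`. -/
def IsAsymptoticRay {V : Type*} (G : SimpleGraph V) : Prop :=
  ∃ f : V ≃ ℕ, ∃ m m' : ℕ,
    (∀ u v : V, Nat.dist (f u) (f v) ≤ m * G.dist u v) ∧
    (∀ i j : ℕ, G.dist (f.symm i) (f.symm j) ≤ m' * Nat.dist i j)

section Enumeration

variable {V : Type*} {g : V → ℕ} {e : ℕ ≃ V}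

theorem exists_equiv_nat_monotone_comp [Infinite V] (hg : ∀ n, (g ⁻¹' {n}).Finite) :
    ∃ e : ℕ ≃ V, Monotone (g ∘ e) := by
  have : Countable V := Set.countable_univ_iff.1 <|
    (Set.countable_iUnion fun n => (hg n).countable).mono fun v _ => Set.mem_iUnion.2 ⟨g v, rfl⟩
  obtain ⟨c, hc⟩ := Countable.exists_injective_nat V
  -- Ordered lexicographically by `(g, c)`, `V` has finite initial segments, so it is `ℕ` as an order.
  let key : V → ℕ ×ₗ ℕ := fun v => toLex (g v, c v)
  let : LinearOrder V := LinearOrder.lift' key fun u v h => hc (congrArg (fun p => (ofLex p).2) h)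
  have : WellFoundedLT V := ⟨InvImage.wf key wellFounded_lt⟩
  have hIic (v : V) : (Set.Iic v).Finite :=
    ((Set.finite_Iic (g v)).biUnion fun n _ => hg n).subset fun w hw =>
      Set.mem_biUnion (Prod.Lex.monotone_fst (key w) (key v) hw) rfl
  let : LocallyFiniteOrder V := .ofFiniteIcc fun _ v => (hIic v).subset Set.Icc_subset_Iic_self
  let : OrderBot V := WellFoundedLT.toOrderBot V
  have : NoMaxOrder V := ⟨fun v => by
    obtain ⟨w, hw⟩ := (hIic v).infinite_compl.nonempty
    exact ⟨w, not_le.1 hw⟩⟩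
  let := LinearLocallyFiniteOrder.succOrder V
  let := LinearLocallyFiniteOrder.predOrder V
  let o : V ≃o ℕ := orderIsoNatOfLinearSuccPredArch
  exact ⟨o.symm.toEquiv, fun i j hij => Prod.Lex.monotone_fst _ _ (o.symm.monotone hij)⟩

theorem natDist_add_one_le_mul_of_encard_fiber_le (he : Monotone (g ∘ e)) {C : ℕ}
    (hC : ∀ n, (g ⁻¹' {n}).encard ≤ C) (i j : ℕ) :
    Nat.dist i j + 1 ≤ C * (Nat.dist (g (e i)) (g (e j)) + 1) := by
  wlog hij : i ≤ j generalizing i j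
  · rw [Nat.dist_comm, Nat.dist_comm (g _)]
    exact this j i (by omega)
  have hg : g (e i) ≤ g (e j) := he hij
  have hcount : ((j + 1 - i : ℕ) : ℕ∞) ≤ C * (g (e j) + 1 - g (e i) : ℕ) :=
    calc ((j + 1 - i : ℕ) : ℕ∞)
        = (e '' Set.Icc i j).encard := by
          rw [e.injective.encard_image, ← Finset.coe_Icc, Set.encard_coe_eq_coe_finsetCard,
            Nat.card_Icc]
      _ ≤ (⋃ n ∈ Finset.Icc (g (e i)) (g (e j)), g ⁻¹' {n}).encard :=
          Set.encard_le_encard <| Set.image_subset_iff.2 fun k hk =>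
            Set.mem_biUnion (Finset.mem_Icc.2 ⟨he hk.1, he hk.2⟩) rfl
      _ ≤ ∑ n ∈ Finset.Icc (g (e i)) (g (e j)), (g ⁻¹' {n}).encard :=
          Finset.set_encard_biUnion_le _ _
      _ ≤ ∑ _n ∈ Finset.Icc (g (e i)) (g (e j)), (C : ℕ∞) := Finset.sum_le_sum fun n _ => hC n
      _ = C * (g (e j) + 1 - g (e i) : ℕ) := by
          rw [Finset.sum_const, Nat.card_Icc, nsmul_eq_mul, mul_comm]
  rw [Nat.dist_eq_sub_of_le hij, Nat.dist_eq_sub_of_le hg]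
  have := Nat.cast_le.1 hcount
  rwa [Nat.sub_add_comm hij, Nat.sub_add_comm hg] at this

theorem natDist_le_of_surjective (he : Monotone (g ∘ e)) (hg : Function.Surjective g)
    (i j : ℕ) : Nat.dist (g (e i)) (g (e j)) ≤ Nat.dist i j := by
  wlog hij : i < j generalizing i j
  · rcases (not_lt.1 hij).eq_or_lt with rfl | hji
    · simp
    · rw [Nat.dist_comm, Nat.dist_comm i]
      exact this j i hji
  have hle : g (e i) ≤ g (e j) := he hij.le
  choose σ hσ using hg
  have hmaps : ∀ n ∈ Finset.Ioo (g (e i)) (g (e j)), e.symm (σ n) ∈ Finset.Ioo i j := by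
    intro n hn
    rw [Finset.mem_Ioo] at hn ⊢
    constructor <;> by_contra! h
    · simpa [hσ] using (he h).trans_lt hn.1
    · simpa [hσ] using hn.2.trans_le (he h)
  have hcard := Finset.card_le_card_of_injOn _ hmaps fun n _ m _ h => by
    simpa [hσ] using congrArg g (e.symm.injective h)
  rw [Nat.card_Ioo, Nat.card_Ioo] at hcard
  rw [Nat.dist_eq_sub_of_le hij.le, Nat.dist_eq_sub_of_le hle]
  omega

end Enumeration

theorem Nat.le_mul_of_le_add_mul {x y A B : ℕ} (h : x ≤ A + B * y) (h0 : y = 0 → x = 0) :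
    x ≤ (A + B) * y := by
  rcases Nat.eq_zero_or_pos y with rfl | hy
  · simp [h0 rfl]
  · nlinarith

namespace SimpleGraph

variable {V : Type*} {G : SimpleGraph V}

theorem Connected.exists_dist_le_and_eq_or_adj (hG : G.Connected) {v x : V} {r : ℕ}
    (h : G.dist v x ≤ r + 1) : ∃ u, G.dist u x ≤ r ∧ (v = u ∨ G.Adj u v) := by
  rcases le_or_gt (G.dist v x) r with hr | hr
  · exact ⟨v, hr, .inl rfl⟩
  obtain ⟨p, hp⟩ := hG.exists_walk_length_eq_dist v x
  cases p with
  | nil => simp at hr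
  | cons hadj q =>
    refine ⟨_, (dist_le q).trans ?_, .inr hadj.symm⟩
    rw [Walk.length_cons] at hp
    omega

theorem Connected.encard_setOf_dist_le_le (hG : G.Connected) {s : ℕ}
    (hdeg : ∀ v, (G.neighborSet v).encard ≤ s) (x : V) (r : ℕ) :
    {v | G.dist v x ≤ r}.encard ≤ (s + 1) ^ r := by
  induction r with
  | zero => simp [hG.dist_eq_zero_iff]
  | succ r ih =>
    have hB : {v | G.dist v x ≤ r}.Finite := Set.finite_of_encard_le_coe ih
    calc {v | G.dist v x ≤ r + 1}.encard
        ≤ (⋃ u ∈ hB.toFinset, insert u (G.neighborSet u)).encard := by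
          refine Set.encard_le_encard fun v hv => ?_
          obtain ⟨u, hu, hvu⟩ := hG.exists_dist_le_and_eq_or_adj hv
          exact Set.mem_biUnion (hB.mem_toFinset.2 hu) hvu
      _ ≤ ∑ u ∈ hB.toFinset, (insert u (G.neighborSet u)).encard :=
          Finset.set_encard_biUnion_le _ _
      _ ≤ ∑ _u ∈ hB.toFinset, ((s : ℕ∞) + 1) :=
          Finset.sum_le_sum fun u _ => (Set.encard_insert_le _ _).trans (by gcongr; exact hdeg u)
      _ = {v | G.dist v x ≤ r}.encard * (s + 1) := by
          rw [Finset.sum_const, nsmul_eq_mul, hB.encard_eq_coe_toFinset_card]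
      _ ≤ (s + 1) ^ (r + 1) := by
          rw [pow_succ]
          gcongr

theorem Connected.natDist_dist_le_dist (hG : G.Connected) (u v x : V) :
    Nat.dist (G.dist u x) (G.dist v x) ≤ G.dist u v := by
  have := hG.dist_triangle (u := u) (v := v) (w := x)
  have := hG.dist_triangle (u := v) (v := u) (w := x)
  rw [dist_comm (u := v) (v := u)] at this
  unfold Nat.dist
  omega

theorem dist_le_natDist_of_adj {a : ℕ → V} (ha : ∀ n, G.Adj (a n) (a (n + 1))) (m n : ℕ) :
    G.dist (a m) (a n) ≤ Nat.dist m n := by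
  have hstep (m k : ℕ) : G.dist (a m) (a (m + k)) ≤ k := by
    induction k with
    | zero => simp
    | succ k ih =>
      calc G.dist (a m) (a (m + (k + 1)))
          ≤ G.dist (a m) (a (m + k)) + G.dist (a (m + k)) (a (m + k + 1)) :=
            (ha _).reachable.dist_triangle_right _
        _ = G.dist (a m) (a (m + k)) + 1 := by rw [dist_eq_one_iff_adj.2 (ha _)]
        _ ≤ k + 1 := Nat.add_le_add_right ih 1
  wlog hmn : m ≤ n generalizing m n
  · rw [dist_comm, Nat.dist_comm]
    exact this n m (by omega)
  obtain ⟨k, rfl⟩ := Nat.exists_eq_add_of_le hmn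
  simpa [Nat.dist_eq_sub_of_le hmn] using hstep m k

theorem Connected.dist_le_two_mul_of_dist_eq (hG : G.Connected) {c : V} {α : ℕ}
    (hsph : ∀ n : ℕ, ∃ x : V, ∀ u : V, G.dist u c = n → G.dist u x ≤ α) {u v : V}
    (h : G.dist u c = G.dist v c) : G.dist u v ≤ 2 * α := by
  obtain ⟨x, hx⟩ := hsph (G.dist u c)
  calc G.dist u v ≤ G.dist u x + G.dist x v := hG.dist_triangle
    _ ≤ α + α := add_le_add (hx u rfl) (dist_comm.trans_le (hx v h.symm))
    _ = 2 * α := (two_mul α).symm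

theorem Connected.dist_le_add_natDist (hG : G.Connected) {a : ℕ → V}
    (hadj : ∀ n, G.Adj (a n) (a (n + 1))) (hdist : ∀ n, G.dist (a n) (a 0) = n) {α : ℕ}
    (hsph : ∀ n : ℕ, ∃ x : V, ∀ u : V, G.dist u (a 0) = n → G.dist u x ≤ α) (u v : V) :
    G.dist u v ≤ 4 * α + Nat.dist (G.dist u (a 0)) (G.dist v (a 0)) := by
  set m := G.dist u (a 0)
  set n := G.dist v (a 0)
  have hu : G.dist u (a m) ≤ 2 * α := hG.dist_le_two_mul_of_dist_eq hsph (hdist m).symm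
  have hv : G.dist (a n) v ≤ 2 * α := hG.dist_le_two_mul_of_dist_eq hsph (hdist n)
  calc G.dist u v ≤ G.dist u (a m) + (G.dist (a m) (a n) + G.dist (a n) v) :=
        hG.dist_triangle.trans (Nat.add_le_add_left hG.dist_triangle _)
    _ ≤ 2 * α + (Nat.dist m n + 2 * α) := by
        gcongr
        exact dist_le_natDist_of_adj hadj m n
    _ = 4 * α + Nat.dist m n := by ring

end SimpleGraph

/-- If `G` is an infinite connected graph with degrees bounded by `s`,
`(aₙ)` is an arrow in `G`, and the spheres around `a₀` are uniformly bounded, then `G`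
is an asymptotic ray. -/
theorem asymptoticRay_of_bounded_spheres {V : Type*} [Infinite V] (G : SimpleGraph V)
    (hG : G.Connected) (s : ℕ) (hdeg : ∀ v : V, (G.neighborSet v).encard ≤ (s : ℕ∞))
    (a : ℕ → V) (ha : IsArrow G a) (α : ℕ)
    (hsph : ∀ n : ℕ, ∃ x : V, ∀ u : V, G.dist u (a 0) = n → G.dist u x ≤ α) :
    IsAsymptoticRay G := by
  have hdist (n : ℕ) : G.dist (a n) (a 0) = n := G.dist_comm.trans (ha.2 n).2
  set g : V → ℕ := fun v => G.dist v (a 0)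
  set C := (s + 1) ^ α
  have hfiber (n : ℕ) : (g ⁻¹' {n}).encard ≤ C := by
    obtain ⟨x, hx⟩ := hsph n
    exact (Set.encard_le_encard fun u hu => hx u hu).trans
      (by exact_mod_cast hG.encard_setOf_dist_le_le hdeg x α)
  obtain ⟨e, he⟩ := exists_equiv_nat_monotone_comp fun n =>
    Set.finite_of_encard_le_coe (hfiber n)
  refine ⟨e.symm, C + C, 4 * α + 1, fun u v => ?_, fun i j => ?_⟩
  · refine Nat.le_mul_of_le_add_mul ?_ fun h => by rw [hG.dist_eq_zero_iff.1 h, Nat.dist_self]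
    have hcount := natDist_add_one_le_mul_of_encard_fiber_le he hfiber (e.symm u) (e.symm v)
    simp only [Equiv.apply_symm_apply] at hcount
    calc Nat.dist (e.symm u) (e.symm v) ≤ C * (Nat.dist (g u) (g v) + 1) := Nat.le_of_succ_le hcount
      _ ≤ C * (G.dist u v + 1) := by gcongr; exact hG.natDist_dist_le_dist u v (a 0)
      _ = C + C * G.dist u v := by ring
  · refine Nat.le_mul_of_le_add_mul ?_ fun h => by
      rw [Nat.eq_of_dist_eq_zero h, SimpleGraph.dist_self]
    have hg := natDist_le_of_surjective he (fun n => ⟨a n, hdist n⟩) i j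
    simpa using (hG.dist_le_add_natDist (fun n => (ha.2 n).1) hdist hsph (e i) (e j)).trans
      (Nat.add_le_add_left hg _)
end

section
/- Let T = (V,E) be an infinite tree (connected acyclic simple graph) with path metric d, let s be a natural number such that ρ(v) ≤ s for all v ∈ V, let (aₙ)ₙ∈ℕ be an arrow in T, and suppose there is a natural number t such that the connected component T(aₙ) of aₙ in the graph obtained from T by deleting all edges (aₖ, a_{k+1}), k ∈ ℕ, has at most t vertices, for every n ∈ ℕ. Then T is an asymptotic ray. -/
/-- The vertex set of `T(aₙ)`: the connected component of `a n` in the graph obtained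
from `G` by deleting the edges `(aₖ, a_{k+1})`, `k ∈ ℕ` (but not the vertices). -/
def arrowComponent {V : Type*} (G : SimpleGraph V) (a : ℕ → V) (n : ℕ) : Set V :=
  {v : V | (G.deleteEdges {e : Sym2 V | ∃ k : ℕ, e = s(a k, a (k + 1))}).Reachable (a n) v}

/-!
Deleting the edges of the arrow cuts `T` into the pieces `T(aₙ)`. They cover `V`, since every
vertex is joined to the arrow by a walk, and they are pairwise disjoint, since in a tree every
edge is a bridge. Each piece has between `1` and `t` vertices, so its vertices lie within distance
`t` of `aₙ`, while `d(aₙ, aₖ) = |n - k|`. Enumerating `V` piece by piece — first `T(a₀)`, then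
`T(a₁)`, and so on — gives a bijection `V ≃ ℕ` that changes distances only up to a bounded
multiplicative and additive error; as distinct points are at distance at least `1` in both
spaces, the additive error is absorbed into the multiplicative one.
-/

open Finset

namespace Nat

def blockStart (sz : ℕ → ℕ) (n : ℕ) : ℕ := ∑ k ∈ range n, sz k

variable {sz : ℕ → ℕ} {n k : ℕ}

lemma blockStart_succ (sz : ℕ → ℕ) (n : ℕ) :
    blockStart sz (n + 1) = blockStart sz n + sz n :=
  sum_range_succ sz n

lemma blockStart_mono : Monotone (blockStart sz) := fun _ _ h =>
  sum_le_sum_of_subset (range_subset_range.mpr h)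

lemma blockStart_add_sum_Ico (h : n ≤ k) :
    blockStart sz n + ∑ i ∈ Ico n k, sz i = blockStart sz k :=
  sum_range_add_sum_Ico sz h

lemma blockStart_add_le (hpos : ∀ i, 0 < sz i) (h : n ≤ k) :
    blockStart sz n + (k - n) ≤ blockStart sz k := by
  rw [← blockStart_add_sum_Ico h]
  gcongr
  simpa using card_nsmul_le_sum (Ico n k) sz 1 fun i _ => hpos i

lemma blockStart_le_add {t : ℕ} (hle : ∀ i, sz i ≤ t) (h : n ≤ k) :
    blockStart sz k ≤ blockStart sz n + (k - n) * t := by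
  rw [← blockStart_add_sum_Ico h]
  gcongr
  simpa using sum_le_card_nsmul (Ico n k) sz t fun i _ => hle i

lemma exists_blockStart_le_lt (hpos : ∀ i, 0 < sz i) (x : ℕ) :
    ∃ n, blockStart sz n ≤ x ∧ x < blockStart sz (n + 1) := by
  induction x with
  | zero => exact ⟨0, by simp [blockStart, hpos 0]⟩
  | succ x ih =>
    obtain ⟨n, hn, hxn⟩ := ih
    by_cases hx : x + 1 < blockStart sz (n + 1)
    · exact ⟨n, by omega, hx⟩
    · have := blockStart_succ sz (n + 1)
      have := hpos (n + 1)
      exact ⟨n + 1, by omega, by omega⟩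

noncomputable def blockEquiv (sz : ℕ → ℕ) (hpos : ∀ i, 0 < sz i) :
    (Σ n, Fin (sz n)) ≃ ℕ :=
  Equiv.ofBijective (fun x => blockStart sz x.1 + x.2) <| by
    refine ⟨fun ⟨n, i⟩ ⟨k, j⟩ hij => ?_, fun x => ?_⟩
    · have hmono : ∀ {n k}, n < k → blockStart sz (n + 1) ≤ blockStart sz k :=
        fun h => blockStart_mono h
      have hn := blockStart_succ sz n
      have hk := blockStart_succ sz k
      simp only at hij
      obtain rfl : n = k := by
        rcases lt_trichotomy n k with h | h | h
        · have := hmono h; omega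
        · exact h
        · have := hmono h; omega
      simp only [Sigma.mk.injEq, heq_eq_eq, true_and]
      exact Fin.ext (by omega)
    · obtain ⟨n, hn, hxn⟩ := exists_blockStart_le_lt hpos x
      refine ⟨⟨n, ⟨x - blockStart sz n, ?_⟩⟩, by simp only; omega⟩
      rw [blockStart_succ] at hxn
      omega

lemma blockEquiv_apply (hpos : ∀ i, 0 < sz i) (x : Σ n, Fin (sz n)) :
    blockEquiv sz hpos x = blockStart sz x.1 + x.2 := rfl

lemma blockStart_le_blockEquiv (hpos : ∀ i, 0 < sz i) (x : Σ n, Fin (sz n)) :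
    blockStart sz x.1 ≤ blockEquiv sz hpos x :=
  Nat.le_add_right _ _

lemma blockEquiv_lt_blockStart_succ (hpos : ∀ i, 0 < sz i) (x : Σ n, Fin (sz n)) :
    blockEquiv sz hpos x < blockStart sz (x.1 + 1) := by
  rw [blockEquiv_apply, blockStart_succ]
  exact Nat.add_lt_add_left x.2.isLt _

lemma dist_le_dist_and_dist_le_mul_of_mem_blocks {t : ℕ} (hpos : ∀ i, 0 < sz i)
    (hle : ∀ i, sz i ≤ t)
    {x y : ℕ} (hx : blockStart sz n ≤ x ∧ x < blockStart sz (n + 1))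
    (hy : blockStart sz k ≤ y ∧ y < blockStart sz (k + 1)) :
    Nat.dist n k ≤ Nat.dist x y ∧ Nat.dist x y ≤ (Nat.dist n k + 1) * t := by
  wlog hnk : n ≤ k generalizing n k x y
  · rw [Nat.dist_comm n, Nat.dist_comm x]
    exact this hy hx (by omega)
  have hlow : n < k → blockStart sz (n + 1) + (k - (n + 1)) ≤ blockStart sz k :=
    blockStart_add_le hpos
  have hhigh := blockStart_le_add hle (show n ≤ k + 1 by omega)
  have hmono := blockStart_mono (sz := sz) hnk
  have hsz := blockStart_succ sz n
  have ht : sz n ≤ (k - n + 1) * t := (hle n).trans (Nat.le_mul_of_pos_left t (by omega))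
  rw [Nat.dist_eq_sub_of_le hnk, show k + 1 - n = k - n + 1 by omega] at *
  unfold Nat.dist
  constructor
  · rcases hnk.lt_or_eq with h | rfl
    · have := hlow h; omega
    · omega
  · omega

lemma le_mul_of_le_mul_add {x y k b : ℕ} (h : x ≤ k * y + b) (h0 : y = 0 → x = 0) :
    x ≤ (k + b) * y := by
  rcases Nat.eq_zero_or_pos y with rfl | hy
  · simp [h0 rfl]
  · nlinarith

end Nat

theorem exists_equiv_nat_dist_le_of_fibers {V : Type*} (c : V → ℕ) (hc : Function.Surjective c)
    {t : ℕ} (hcard : ∀ n, (c ⁻¹' {n}).encard ≤ t) :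
    ∃ e : V ≃ ℕ, ∀ u v, Nat.dist (c u) (c v) ≤ Nat.dist (e u) (e v) ∧
      Nat.dist (e u) (e v) ≤ (Nat.dist (c u) (c v) + 1) * t := by
  have hfin (n : ℕ) : Finite {v // c v = n} := (Set.finite_of_encard_le_coe (hcard n)).to_subtype
  have hpos (n : ℕ) : 0 < Nat.card {v // c v = n} :=
    have : Nonempty {v // c v = n} := ⟨⟨_, (hc n).choose_spec⟩⟩
    Nat.card_pos
  have hle (n : ℕ) : Nat.card {v // c v = n} ≤ t :=
    (Set.encard_le_coe_iff_finite_ncard_le.mp (hcard n)).2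
  let x : V ≃ Σ n, Fin (Nat.card {v // c v = n}) :=
    (Equiv.sigmaFiberEquiv c).symm.trans (Equiv.sigmaCongrRight fun _ => Finite.equivFin _)
  have hblock (v : V) := And.intro (Nat.blockStart_le_blockEquiv hpos (x v))
    (Nat.blockEquiv_lt_blockStart_succ hpos (x v))
  exact ⟨x.trans (Nat.blockEquiv _ hpos), fun u v =>
    Nat.dist_le_dist_and_dist_le_mul_of_mem_blocks hpos hle (hblock u) (hblock v)⟩

namespace SimpleGraph

variable {V : Type*} {G : SimpleGraph V}

lemma Reachable.dist_lt_ncard {u v : V} (h : G.Reachable u v)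
    (hfin : {w | G.Reachable u w}.Finite) : G.dist u v < {w | G.Reachable u w}.ncard := by
  classical
  obtain ⟨p, hp⟩ := h.exists_walk_length_eq_dist
  have hpath := p.isPath_of_length_eq_dist hp
  calc G.dist u v < p.support.length := by rw [Walk.length_support, hp]; omega
    _ = (p.support.toFinset : Set V).ncard := by
      rw [Set.ncard_coe_finset, List.toFinset_card_of_nodup hpath.support_nodup]
    _ ≤ _ := Set.ncard_le_ncard
      (fun x hx => show G.Reachable u x from ⟨p.takeUntil x (by simpa using hx)⟩) hfin

lemma Connected.dist_le_dist_add_dist_add_dist (hG : G.Connected) (u x y v : V) :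
    G.dist u v ≤ G.dist u x + G.dist x y + G.dist y v :=
  (hG.dist_triangle).trans (Nat.add_le_add_right hG.dist_triangle _)

end SimpleGraph

open SimpleGraph

section Arrow

variable {V : Type*} {T : SimpleGraph V} {a : ℕ → V}

def arrowEdges (a : ℕ → V) : Set (Sym2 V) := {e | ∃ k : ℕ, e = s(a k, a (k + 1))}

lemma self_mem_arrowComponent {n : ℕ} : a n ∈ arrowComponent T a n := Reachable.refl _

lemma IsArrow.dist_add (hT : T.Connected) (ha : IsArrow T a) (n m : ℕ) :
    T.dist (a n) (a (n + m)) = m := by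
  have hle : T.dist (a n) (a (n + m)) ≤ m := by
    induction m with
    | zero => simp
    | succ m ih =>
      calc T.dist (a n) (a (n + (m + 1)))
          ≤ T.dist (a n) (a (n + m)) + T.dist (a (n + m)) (a (n + m + 1)) := hT.dist_triangle
        _ ≤ m + 1 := by rw [dist_eq_one_iff_adj.mpr (ha.2 _).1]; omega
  have := (hT.dist_triangle (u := a 0) (v := a n) (w := a (n + m)))
  rw [(ha.2 n).2, (ha.2 (n + m)).2] at this
  omega

lemma IsArrow.dist_eq (hT : T.Connected) (ha : IsArrow T a) (n k : ℕ) :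
    T.dist (a n) (a k) = Nat.dist n k := by
  wlog hnk : n ≤ k generalizing n k
  · rw [dist_comm, Nat.dist_comm]; exact this k n (by omega)
  obtain ⟨m, rfl⟩ := Nat.exists_eq_add_of_le hnk
  rw [ha.dist_add hT, Nat.dist_eq_sub_of_le hnk, Nat.add_sub_cancel_left]

lemma exists_mem_arrowComponent (hT : T.Preconnected) (v : V) :
    ∃ n, v ∈ arrowComponent T a n := by
  set P : V → Prop := fun x => ∃ n, x ∈ arrowComponent T a n
  have hstep {x y : V} (hxy : T.Adj x y) (hx : P x) : P y := by
    obtain ⟨n, hn⟩ := hx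
    by_cases he : s(x, y) ∈ arrowEdges a
    · obtain ⟨k, hk⟩ := he
      rcases Sym2.eq_iff.mp hk with ⟨-, rfl⟩ | ⟨-, rfl⟩
      · exact ⟨k + 1, Reachable.refl _⟩
      · exact ⟨k, Reachable.refl _⟩
    · exact ⟨n, hn.trans (deleteEdges_adj.mpr ⟨hxy, he⟩).reachable⟩
  have hwalk {x y : V} (p : T.Walk x y) : P x → P y := by
    induction p with
    | nil => exact id
    | cons h _ ih => exact fun hx => ih (hstep h hx)
  exact hwalk (hT (a 0) v).some ⟨0, Reachable.refl _⟩

/-- Deleting a single edge of the arrow already separates its endpoints, since every edge of an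
acyclic graph is a bridge; the later terms of the arrow stay on the far side of it. -/
lemma not_reachable_deleteEdges_arrowEdges (hT : T.IsAcyclic) (hinj : Function.Injective a)
    (hadj : ∀ n, T.Adj (a n) (a (n + 1))) {n k : ℕ} (hnk : n < k) :
    ¬ (T.deleteEdges (arrowEdges a)).Reachable (a n) (a k) := by
  set G' := T.deleteEdges {s(a n, a (n + 1))}
  have hbridge : ¬ G'.Reachable (a n) (a (n + 1)) :=
    isBridge_iff.mp (isAcyclic_iff_forall_adj_isBridge.mp hT (hadj n))
  have hfar (j : ℕ) : G'.Reachable (a (n + 1)) (a (n + 1 + j)) := by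
    induction j with
    | zero => rfl
    | succ j ih =>
      refine ih.trans (deleteEdges_adj.mpr ⟨hadj _, fun he => ?_⟩).reachable
      rcases Sym2.eq_iff.mp (Set.mem_singleton_iff.mp he) with ⟨h, -⟩ | ⟨-, h⟩
      · have := hinj h; omega
      · have := hinj h; omega
  intro hreach
  have hsub : T.deleteEdges (arrowEdges a) ≤ G' :=
    deleteEdges_anti (Set.singleton_subset_iff.mpr ⟨n, rfl⟩)
  have hk := hfar (k - (n + 1))
  rw [show n + 1 + (k - (n + 1)) = k by omega] at hk
  exact hbridge ((hreach.mono hsub).trans hk.symm)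

lemma eq_of_mem_arrowComponent (hT : T.IsAcyclic) (hinj : Function.Injective a)
    (hadj : ∀ n, T.Adj (a n) (a (n + 1))) {n k : ℕ} {v : V}
    (hn : v ∈ arrowComponent T a n) (hk : v ∈ arrowComponent T a k) : n = k := by
  by_contra hne
  rcases Nat.lt_or_gt_of_ne hne with h | h
  · exact not_reachable_deleteEdges_arrowEdges hT hinj hadj h (hn.trans hk.symm)
  · exact not_reachable_deleteEdges_arrowEdges hT hinj hadj h (hk.trans hn.symm)

lemma exists_preimage_singleton_eq_arrowComponent (hT : T.IsTree) (hinj : Function.Injective a)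
    (hadj : ∀ n, T.Adj (a n) (a (n + 1))) :
    ∃ c : V → ℕ, ∀ n, c ⁻¹' {n} = arrowComponent T a n := by
  choose c hc using exists_mem_arrowComponent hT.connected.preconnected (a := a)
  exact ⟨c, fun n => Set.ext fun v =>
    ⟨fun h => h ▸ hc v, eq_of_mem_arrowComponent hT.isAcyclic hinj hadj (hc v)⟩⟩

lemma dist_le_of_mem_arrowComponent {n t : ℕ} {v : V}
    (hcomp : (arrowComponent T a n).encard ≤ t) (hv : v ∈ arrowComponent T a n) :
    T.dist (a n) v ≤ t := by
  obtain ⟨hfin, hcard⟩ := Set.encard_le_coe_iff_finite_ncard_le.mp hcomp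
  calc T.dist (a n) v ≤ (T.deleteEdges (arrowEdges a)).dist (a n) v :=
        hv.dist_anti (deleteEdges_le _)
    _ ≤ t := ((Reachable.dist_lt_ncard hv hfin).trans_le hcard).le

variable {c : V → ℕ} {t : ℕ}

lemma IsArrow.dist_le_natDist_add (hT : T.Connected) (ha : IsArrow T a)
    (hc : ∀ v, T.dist (a (c v)) v ≤ t) (u v : V) :
    T.dist u v ≤ Nat.dist (c u) (c v) + 2 * t := by
  have := hT.dist_le_dist_add_dist_add_dist u (a (c u)) (a (c v)) v
  rw [dist_comm (v := a (c u)), ha.dist_eq hT] at this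
  linarith [hc u, hc v]

lemma IsArrow.natDist_le_dist_add (hT : T.Connected) (ha : IsArrow T a)
    (hc : ∀ v, T.dist (a (c v)) v ≤ t) (u v : V) :
    Nat.dist (c u) (c v) ≤ T.dist u v + 2 * t := by
  have := hT.dist_le_dist_add_dist_add_dist (a (c u)) u v (a (c v))
  rw [dist_comm (u := v), ha.dist_eq hT] at this
  linarith [hc u, hc v]

end Arrow

theorem tree_asymptoticRay_of_components_bounded_general {V : Type*}
    (T : SimpleGraph V) (hT : T.IsTree)
    (a : ℕ → V) (ha : IsArrow T a) (t : ℕ)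
    (hcomp : ∀ n : ℕ, (arrowComponent T a n).encard ≤ (t : ℕ∞)) :
    IsAsymptoticRay T := by
  have hconn := hT.connected
  obtain ⟨c, hc⟩ := exists_preimage_singleton_eq_arrowComponent hT ha.1 fun n => (ha.2 n).1
  have hmem (v : V) : v ∈ arrowComponent T a (c v) := hc (c v) ▸ rfl
  obtain ⟨e, he⟩ := exists_equiv_nat_dist_le_of_fibers c
    (fun n => ⟨a n, show a n ∈ c ⁻¹' {n} from hc n ▸ self_mem_arrowComponent⟩)
    (fun n => hc n ▸ hcomp n)
  have hanchor (v : V) : T.dist (a (c v)) v ≤ t :=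
    dist_le_of_mem_arrowComponent (hcomp _) (hmem v)
  refine ⟨e, t + (2 * t + 1) * t, 1 + 2 * t, fun u v => ?_, fun i j => ?_⟩
  · refine Nat.le_mul_of_le_mul_add ?_ fun h => by simp [hconn.dist_eq_zero_iff.mp h]
    calc Nat.dist (e u) (e v) ≤ (Nat.dist (c u) (c v) + 1) * t := (he u v).2
      _ ≤ (T.dist u v + 2 * t + 1) * t := by
        gcongr; exact ha.natDist_le_dist_add hconn hanchor u v
      _ = t * T.dist u v + (2 * t + 1) * t := by ring
  · refine Nat.le_mul_of_le_mul_add ?_ fun h => by simp [Nat.eq_of_dist_eq_zero h]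
    set u := e.symm i
    set v := e.symm j
    calc T.dist u v ≤ Nat.dist (c u) (c v) + 2 * t := ha.dist_le_natDist_add hconn hanchor u v
      _ ≤ Nat.dist i j + 2 * t := by simpa [u, v] using (he u v).1
      _ = 1 * Nat.dist i j + 2 * t := by ring

/-- If `T` is an infinite tree with degrees bounded by `s`, `(aₙ)` is an
arrow in `T`, and the components `T(aₙ)` obtained by deleting the arrow's edges have at
most `t` vertices each, then `T` is an asymptotic ray. -/
theorem tree_asymptoticRay_of_components_bounded {V : Type*} [Infinite V]
    (T : SimpleGraph V) (hT : T.IsTree) (s : ℕ)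
    (hdeg : ∀ v : V, (T.neighborSet v).encard ≤ (s : ℕ∞))
    (a : ℕ → V) (ha : IsArrow T a) (t : ℕ)
    (hcomp : ∀ n : ℕ, (arrowComponent T a n).encard ≤ (t : ℕ∞)) :
    IsAsymptoticRay T :=
  tree_asymptoticRay_of_components_bounded_general T hT a ha t hcomp
end

section
/- Let T = (V,E) be a tree (connected acyclic simple graph) with path metric d, let (aₙ)ₙ∈ℕ be an arrow in T with A = {aₙ : n ∈ ℕ}, and suppose there is a natural number r such that V = B(A,r). Then for every n ∈ ℕ, the connected component T(aₙ) of aₙ in the graph obtained from T by deleting all edges (aₖ, a_{k+1}), k ∈ ℕ, satisfies V(T(aₙ)) ⊆ B(aₙ, r). -/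
/-!
An arrow vertex `a m ≠ a n` lies beyond one of the two arrow edges at `a n`, while every
vertex `v` of `T(aₙ)` lies on the side of `a n`. Since every edge of a tree is a bridge,
a shortest path from `v` to `a m` must cross that edge and hence pass through `a n`, so
`d(v, a n) ≤ d(v, a m)`. Thus `a n` is an arrow vertex nearest to `v`, and `V = B(A, r)`
gives `d(v, a n) ≤ r`.
-/

namespace SimpleGraph

variable {V : Type*} {G : SimpleGraph V}

lemma reachable_of_adj_succ {f : ℕ → V} {i j : ℕ} (hij : i ≤ j)
    (hadj : ∀ k, i ≤ k → k < j → G.Adj (f k) (f (k + 1))) : G.Reachable (f i) (f j) := by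
  induction j, hij using Nat.le_induction with
  | base => rfl
  | succ j hij ih =>
    exact (ih fun k hik hkj ↦ hadj k hik (by omega)).trans
      (hadj j hij j.lt_succ_self).reachable

lemma IsAcyclic.dist_le_of_reachable_deleteEdges (hG : G.IsAcyclic) {x y u w : V}
    (hxy : G.Adj x y) (hu : (G.deleteEdges {s(x, y)}).Reachable x u)
    (hw : (G.deleteEdges {s(x, y)}).Reachable y w) : G.dist u x ≤ G.dist u w := by
  classical
  have hreach : G.Reachable u w :=
    (hu.mono (deleteEdges_le _)).symm.trans (hxy.reachable.trans (hw.mono (deleteEdges_le _)))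
  obtain ⟨p, hp⟩ := hreach.exists_walk_length_eq_dist
  have hbridge : G.IsBridge s(x, y) := isAcyclic_iff_forall_adj_isBridge.mp hG hxy
  have hcross : s(x, y) ∈ p.edges := by
    by_contra hp'
    exact isBridge_iff.mp hbridge
      (hu.trans ((reachable_deleteEdges_iff_exists_walk.mpr ⟨p, hp'⟩).trans hw.symm))
  have hx : x ∈ p.support := p.fst_mem_support_of_mem_edges hcross
  calc G.dist u x ≤ (p.takeUntil x hx).length := dist_le _
    _ ≤ p.length := p.length_takeUntil_le_length hx
    _ = G.dist u w := hp

end SimpleGraph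

namespace IsArrow

open SimpleGraph

variable {V : Type*} {G : SimpleGraph V} {a : ℕ → V}

lemma reachable_deleteEdges (ha : IsArrow G a) {i j k : ℕ} (hij : i ≤ j) (hk : k < i ∨ j ≤ k) :
    (G.deleteEdges {s(a k, a (k + 1))}).Reachable (a i) (a j) := by
  refine reachable_of_adj_succ hij fun l hil hlj ↦ ?_
  rw [deleteEdges_adj, Set.mem_singleton_iff, Sym2.eq_iff]
  refine ⟨(ha.2 l).1, ?_⟩
  rintro (⟨h, -⟩ | ⟨h, h'⟩)
  · have := ha.1 h
    omega
  · have := ha.1 h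
    have := ha.1 h'
    omega

lemma exists_adj_reachable_deleteEdges (ha : IsArrow G a) {m n : ℕ} (hmn : m ≠ n) :
    ∃ y, (∃ k, s(a n, y) = s(a k, a (k + 1))) ∧ G.Adj (a n) y ∧
      (G.deleteEdges {s(a n, y)}).Reachable y (a m) := by
  rcases Nat.lt_or_gt_of_ne hmn with hlt | hgt
  · obtain ⟨n, rfl⟩ := Nat.exists_eq_add_of_lt hlt
    refine ⟨a (m + n), ⟨m + n, Sym2.eq_swap⟩, (ha.2 (m + n)).1.symm, ?_⟩
    rw [Sym2.eq_swap]
    exact (ha.reachable_deleteEdges (by omega) (by omega)).symm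
  · exact ⟨a (n + 1), ⟨n, rfl⟩, (ha.2 n).1,
      ha.reachable_deleteEdges (by omega) (by omega)⟩

lemma dist_le_dist_of_mem_arrowComponent (hG : G.IsAcyclic) (ha : IsArrow G a) {n : ℕ}
    {v : V} (hv : v ∈ arrowComponent G a n) (m : ℕ) : G.dist v (a n) ≤ G.dist v (a m) := by
  rcases eq_or_ne m n with rfl | hmn
  · exact le_rfl
  obtain ⟨y, ⟨k, hk⟩, hadj, hy⟩ := ha.exists_adj_reachable_deleteEdges hmn
  have hv' : (G.deleteEdges {s(a n, y)}).Reachable (a n) v :=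
    hv.mono <| deleteEdges_anti <| Set.singleton_subset_iff.mpr (by exact ⟨k, hk⟩)
  exact hG.dist_le_of_reachable_deleteEdges hadj hv' hy

end IsArrow

/-- If `T` is a tree with an arrow `(aₙ)` and `V = B(A, r)` for
`A = {aₙ : n ∈ ℕ}`, then each component `T(aₙ)` obtained by deleting the arrow's edges is
contained in the ball `B(aₙ, r)`. -/
theorem tree_component_subset_ball {V : Type*} (T : SimpleGraph V) (hT : T.IsTree)
    (a : ℕ → V) (ha : IsArrow T a) (r : ℕ)
    (hr : ∀ v : V, ∃ n : ℕ, T.dist v (a n) ≤ r) :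
    ∀ n : ℕ, arrowComponent T a n ⊆ {u : V | T.dist u (a n) ≤ r} := by
  intro n v hv
  obtain ⟨m, hm⟩ := hr v
  exact (ha.dist_le_dist_of_mem_arrowComponent hT.isAcyclic hv m).trans hm
end
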